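/- arXiv:2103.00285 — 4 statements merged into one kernel-verified Lean document; each statement's English description precedes it below -/
import Mathlib

section
/- Let R ≥ 0 and let x, φ be real numbers with |x| ≤ R and |φ| ≤ π/4. Then −2 − 3R·cos φ + R·cos 3φ + 3x·sin φ + x·sin 3φ ≤ −2; in particular this expression is strictly negative. -/
/-!
Writing `s = sin φ`, `c = cos φ`, the expression is
`-2 - R (3c - cos 3φ) + x (3s + sin 3φ) = -2 - 2R c (1 + 2s²) + 2x s (1 + 2c²)`.
Since `s² + c² = 1`, we have `c (1 + 2s²) - |s| (1 + 2c²) = (c - |s|)³`, which is nonnegative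
because `|s| ≤ c` for `|φ| ≤ π/4`. Hence the `x`-term is dominated by the `R`-term when `|x| ≤ R`.
-/

open Real

lemma abs_sin_le_cos_of_abs_le_pi_div_four {φ : ℝ} (hφ : |φ| ≤ π / 4) : |sin φ| ≤ cos φ := by
  obtain ⟨hφ_lower, hφ_upper⟩ := abs_le.mp hφ
  have hcos : 0 ≤ cos φ := cos_nonneg_of_mem_Icc ⟨by linarith [pi_pos], by linarith [pi_pos]⟩
  have hcos_two_mul : 0 ≤ cos (2 * φ) := cos_nonneg_of_mem_Icc ⟨by linarith, by linarith⟩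
  refine abs_le_of_sq_le_sq ?_ hcos
  nlinarith [cos_two_mul φ, sin_sq_add_cos_sq φ]

lemma three_sin_add_sin_three_mul (φ : ℝ) :
    3 * sin φ + sin (3 * φ) = 2 * sin φ * (1 + 2 * cos φ ^ 2) := by
  rw [sin_three_mul, cos_sq']
  ring

lemma three_cos_sub_cos_three_mul (φ : ℝ) :
    3 * cos φ - cos (3 * φ) = 2 * cos φ * (1 + 2 * sin φ ^ 2) := by
  rw [cos_three_mul, sin_sq]
  ring

lemma abs_mul_one_add_two_sq_le {s c : ℝ} (hsc : s ^ 2 + c ^ 2 = 1) (h : |s| ≤ c) :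
    |s| * (1 + 2 * c ^ 2) ≤ c * (1 + 2 * s ^ 2) := by
  have hcube : c * (1 + 2 * s ^ 2) - |s| * (1 + 2 * c ^ 2) = (c - |s|) ^ 3 := by
    linear_combination (|s| - c) * hsc + (|s| - 3 * c) * sq_abs s
  linarith [pow_nonneg (sub_nonneg.mpr h) 3]

lemma abs_three_sin_add_sin_three_mul_le {φ : ℝ} (hφ : |φ| ≤ π / 4) :
    |3 * sin φ + sin (3 * φ)| ≤ 3 * cos φ - cos (3 * φ) := by
  have hpos : (0 : ℝ) < 1 + 2 * cos φ ^ 2 := by positivity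
  rw [three_sin_add_sin_three_mul, three_cos_sub_cos_three_mul, abs_mul, abs_mul,
    abs_two, abs_of_pos hpos, mul_assoc, mul_assoc]
  exact mul_le_mul_of_nonneg_left
    (abs_mul_one_add_two_sq_le (sin_sq_add_cos_sq φ) (abs_sin_le_cos_of_abs_le_pi_div_four hφ))
    zero_le_two

/-- The numerator of `g'(φ)` is bounded above by `-2`, hence strictly negative, on the
region `|x| ≤ R`, `|φ| ≤ π/4`. -/
theorem numerator_negative (R x φ : ℝ) (hR : 0 ≤ R) (hx : |x| ≤ R) (hφ : |φ| ≤ π / 4) :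
    -2 - 3 * R * Real.cos φ + R * Real.cos (3 * φ) + 3 * x * Real.sin φ +
        x * Real.sin (3 * φ) ≤ -2 ∧
    -2 - 3 * R * Real.cos φ + R * Real.cos (3 * φ) + 3 * x * Real.sin φ +
        x * Real.sin (3 * φ) < 0 := by
  have hdominated : x * (3 * sin φ + sin (3 * φ)) ≤ R * (3 * cos φ - cos (3 * φ)) :=
    calc x * (3 * sin φ + sin (3 * φ))
        ≤ |x| * |3 * sin φ + sin (3 * φ)| := by rw [← abs_mul]; exact le_abs_self _
      _ ≤ R * (3 * cos φ - cos (3 * φ)) :=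
        mul_le_mul hx (abs_three_sin_add_sin_three_mul_le hφ) (abs_nonneg _) hR
  constructor <;> linarith
end

section
/- Let R > 0, h > 0, and 0 < η < π/4. Then there exists k_crit > 0 such that for every gain 0 < k < k_crit there exists a constant 0 ≤ c < 1 such that for every x ∈ [−R, R], the map g(φ) = φ + h·k·(2·sin φ·(R + cos φ) − 2·x·cos φ)/(sin²φ − cos²φ) satisfies |g(φ₁) − g(φ₂)| ≤ c·|φ₁ − φ₂| for all φ₁, φ₂ ∈ [−π/4 + η, π/4 − η]; that is, g is a contraction on this interval, uniformly in x ∈ [−R, R]. -/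
/-!
Write `u = h k` and `N` for the numerator of the steering term. Since
`sin² φ - cos² φ = -cos 2φ`, the map is `g = id - u F` with `F = N / cos 2φ`, and
`F' = P / cos² 2φ` where `P = 2 + 2R c (c² + 3s²) - 2x s (s² + 3c²)` (`c = cos φ`, `s = sin φ`).
For `|φ| ≤ π/4` we have `|s| ≤ c`, and `c (c² + 3s²) - |s| (s² + 3c²) = (c - |s|)³ ≥ 0`, so
`|x| ≤ R` gives `P ≥ 2`, hence `F' ≥ 2` and `g' ≤ 1 - 2u`. On the shrunken interval
`cos² 2φ ≥ sin² 2η`, so `F' ≤ (2 + 16R) / sin² 2η` and `g' ≥ 0` once `k` is small.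
The mean value inequality then makes `g` a `(1 - 2u)`-contraction.
-/

open Real

noncomputable def headingMap (R x u φ : ℝ) : ℝ :=
  φ + u * (2 * sin φ * (R + cos φ) - 2 * x * cos φ) / (sin φ ^ 2 - cos φ ^ 2)

noncomputable def steeringSlope (R x φ : ℝ) : ℝ :=
  (2 + 2 * R * (cos φ * (cos φ ^ 2 + 3 * sin φ ^ 2)) -
      2 * x * (sin φ * (sin φ ^ 2 + 3 * cos φ ^ 2))) / (sin φ ^ 2 - cos φ ^ 2) ^ 2

theorem hasDerivAt_headingMap (R x u : ℝ) {φ : ℝ} (hφ : sin φ ^ 2 - cos φ ^ 2 ≠ 0) :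
    HasDerivAt (headingMap R x u) (1 - u * steeringSlope R x φ) φ := by
  have hN : HasDerivAt (fun t => u * (2 * sin t * (R + cos t) - 2 * x * cos t))
      (u * (2 * cos φ * (R + cos φ) + 2 * sin φ * -sin φ - 2 * x * -sin φ)) φ :=
    ((((hasDerivAt_sin φ).const_mul 2).mul ((hasDerivAt_cos φ).const_add R)).sub
      ((hasDerivAt_cos φ).const_mul (2 * x))).const_mul u
  have hD : HasDerivAt (fun t => sin t ^ 2 - cos t ^ 2) (4 * sin φ * cos φ) φ :=
    (((hasDerivAt_sin φ).pow 2).sub ((hasDerivAt_cos φ).pow 2)).congr_deriv (by norm_num; ring)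
  refine ((hasDerivAt_id' φ).add (hN.div hD hφ)).congr_deriv ?_
  unfold steeringSlope
  field_simp
  linear_combination (-2 * u) * (sin φ ^ 2 + cos φ ^ 2 + 1) * sin_sq_add_cos_sq φ

theorem abs_mul_mul_le {x R s Q : ℝ} (hx : |x| ≤ R) (hQ : 0 ≤ Q) :
    |x * (s * Q)| ≤ R * (|s| * Q) := by
  rw [abs_mul, abs_mul, abs_of_nonneg hQ]
  gcongr

theorem mul_sq_add_three_mul_sq_le {a c : ℝ} (h : a ≤ c) :
    a * (a ^ 2 + 3 * c ^ 2) ≤ c * (c ^ 2 + 3 * a ^ 2) := by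
  nlinarith [pow_nonneg (sub_nonneg.2 h) 3]

theorem two_le_steeringSlope {R x φ : ℝ} (hx : |x| ≤ R) (hφ : |sin φ| ≤ cos φ)
    (hD : sin φ ^ 2 - cos φ ^ 2 ≠ 0) : 2 ≤ steeringSlope R x φ := by
  have hcube := mul_sq_add_three_mul_sq_le hφ
  rw [sq_abs] at hcube
  have hxs : x * (sin φ * (sin φ ^ 2 + 3 * cos φ ^ 2)) ≤ R * (cos φ * (cos φ ^ 2 + 3 * sin φ ^ 2)) :=
    calc x * (sin φ * (sin φ ^ 2 + 3 * cos φ ^ 2))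
        ≤ R * (|sin φ| * (sin φ ^ 2 + 3 * cos φ ^ 2)) :=
          (le_abs_self _).trans (abs_mul_mul_le hx (by positivity))
      _ ≤ R * (cos φ * (cos φ ^ 2 + 3 * sin φ ^ 2)) := by
          gcongr
          exact (abs_nonneg x).trans hx
  have hD1 : (sin φ ^ 2 - cos φ ^ 2) ^ 2 ≤ 1 := by
    nlinarith [sin_sq_add_cos_sq φ, sq_nonneg (sin φ * cos φ)]
  unfold steeringSlope
  rw [le_div_iff₀ (by positivity)]
  linarith

theorem steeringSlope_le {R x φ : ℝ} (hx : |x| ≤ R) :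
    steeringSlope R x φ ≤ (2 + 16 * R) / (sin φ ^ 2 - cos φ ^ 2) ^ 2 := by
  have hR₀ : 0 ≤ R := (abs_nonneg x).trans hx
  have hRabs : |R| ≤ R := (abs_of_nonneg hR₀).le
  have hcube : |cos φ| * (cos φ ^ 2 + 3 * sin φ ^ 2) + |sin φ| * (sin φ ^ 2 + 3 * cos φ ^ 2) ≤ 8 :=
    calc _ = (|cos φ| + |sin φ|) ^ 3 := by rw [← sq_abs (cos φ), ← sq_abs (sin φ)]; ring
      _ ≤ 2 ^ 3 := by
          gcongr
          linarith [abs_cos_le_one φ, abs_sin_le_one φ]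
      _ = 8 := by norm_num
  have hRc := (le_abs_self _).trans
    (abs_mul_mul_le (s := cos φ) hRabs (by positivity : 0 ≤ cos φ ^ 2 + 3 * sin φ ^ 2))
  have hxs := (neg_abs_le _).trans'
    (neg_le_neg (abs_mul_mul_le (s := sin φ) hx (by positivity : 0 ≤ sin φ ^ 2 + 3 * cos φ ^ 2)))
  unfold steeringSlope
  gcongr
  nlinarith [mul_le_mul_of_nonneg_left hcube hR₀]

theorem sin_two_mul_le_cos_sq_sub_sin_sq {η φ : ℝ} (hη : 0 ≤ η)
    (hφ : φ ∈ Set.Icc (-(π / 4) + η) (π / 4 - η)) : sin (2 * η) ≤ cos φ ^ 2 - sin φ ^ 2 := by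
  obtain ⟨h₁, h₂⟩ := hφ
  rw [← cos_two_mul', ← cos_abs, ← cos_pi_div_two_sub]
  exact cos_le_cos_of_nonneg_of_le_pi (abs_nonneg _) (by linarith [pi_pos])
    (abs_le.2 ⟨by linarith, by linarith⟩)

theorem abs_one_sub_mul_le {u d : ℝ} (hu : 0 ≤ u) (hd : 2 ≤ d) (hud : u * d ≤ 1) :
    |1 - u * d| ≤ 1 - 2 * u :=
  abs_le.2 ⟨by nlinarith, by nlinarith⟩

theorem abs_headingMap_sub_le {R x u η φ₁ φ₂ : ℝ} (hx : |x| ≤ R) (hη : 0 < η) (hη' : η < π / 4)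
    (hu : 0 ≤ u) (huR : u * (2 + 16 * R) ≤ sin (2 * η) ^ 2)
    (h₁ : φ₁ ∈ Set.Icc (-(π / 4) + η) (π / 4 - η)) (h₂ : φ₂ ∈ Set.Icc (-(π / 4) + η) (π / 4 - η)) :
    |headingMap R x u φ₁ - headingMap R x u φ₂| ≤ (1 - 2 * u) * |φ₁ - φ₂| := by
  have hε : 0 < sin (2 * η) := sin_pos_of_pos_of_lt_pi (by linarith) (by linarith)
  have hderiv : ∀ φ ∈ Set.Icc (-(π / 4) + η) (π / 4 - η),
      HasDerivAt (headingMap R x u) (1 - u * steeringSlope R x φ) φ ∧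
        |1 - u * steeringSlope R x φ| ≤ 1 - 2 * u := by
    intro φ hφ
    have hD := sin_two_mul_le_cos_sq_sub_sin_sq hη.le hφ
    have hD₀ : sin φ ^ 2 - cos φ ^ 2 ≠ 0 := by linarith
    have hcos : 0 ≤ cos φ := cos_nonneg_of_mem_Icc ⟨by linarith [hφ.1], by linarith [hφ.2]⟩
    have hsin : |sin φ| ≤ cos φ := abs_le_of_sq_le_sq (by linarith) hcos
    refine ⟨hasDerivAt_headingMap R x u hD₀, abs_one_sub_mul_le hu
      (two_le_steeringSlope hx hsin hD₀) ?_⟩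
    calc u * steeringSlope R x φ ≤ u * ((2 + 16 * R) / (sin φ ^ 2 - cos φ ^ 2) ^ 2) := by
          gcongr; exact steeringSlope_le hx
      _ ≤ sin (2 * η) ^ 2 / (sin φ ^ 2 - cos φ ^ 2) ^ 2 := by
          rw [← mul_div_assoc]; gcongr
      _ ≤ 1 := by
          rw [div_le_one (by positivity)]
          nlinarith
  simpa only [Real.norm_eq_abs] using
    (convex_Icc _ _).norm_image_sub_le_of_norm_hasDerivWithin_le
      (fun φ hφ => (hderiv φ hφ).1.hasDerivWithinAt) (fun φ hφ => (hderiv φ hφ).2) h₂ h₁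

/-- For every sufficiently small gain `k`, the one-step heading-update map `g` is a
contraction on `[-π/4 + η, π/4 - η]`, uniformly in the lateral position `x ∈ [-R, R]`. -/
theorem heading_map_contraction (R h η : ℝ) (hR : 0 < R) (hh : 0 < h)
    (hη : 0 < η) (hη' : η < π / 4) :
    ∃ kcrit > (0 : ℝ), ∀ k : ℝ, 0 < k → k < kcrit →
      ∃ c : ℝ, 0 ≤ c ∧ c < 1 ∧
        ∀ x ∈ Set.Icc (-R) R,
          ∀ φ₁ ∈ Set.Icc (-(π / 4) + η) (π / 4 - η),
            ∀ φ₂ ∈ Set.Icc (-(π / 4) + η) (π / 4 - η),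
              |(φ₁ + h * k * (2 * Real.sin φ₁ * (R + Real.cos φ₁) - 2 * x * Real.cos φ₁) /
                    (Real.sin φ₁ ^ 2 - Real.cos φ₁ ^ 2)) -
                (φ₂ + h * k * (2 * Real.sin φ₂ * (R + Real.cos φ₂) - 2 * x * Real.cos φ₂) /
                    (Real.sin φ₂ ^ 2 - Real.cos φ₂ ^ 2))| ≤ c * |φ₁ - φ₂| := by
  have hε : 0 < sin (2 * η) := sin_pos_of_pos_of_lt_pi (by linarith) (by linarith)
  refine ⟨sin (2 * η) ^ 2 / (h * (2 + 16 * R)), by positivity, fun k hk hkcrit => ?_⟩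
  have hu : h * k * (2 + 16 * R) ≤ sin (2 * η) ^ 2 := by
    rw [lt_div_iff₀ (by positivity)] at hkcrit
    linarith
  have hhk : 0 < h * k := mul_pos hh hk
  refine ⟨1 - 2 * (h * k), ?_, by linarith, fun x hx φ₁ h₁ φ₂ h₂ =>
    abs_headingMap_sub_le (abs_le.2 hx) hη hη' hhk.le hu h₁ h₂⟩
  nlinarith [sin_le_one (2 * η)]
end

section
/- Let f > 0, v > 0, Y ≠ 0, and X₀ > 0. Suppose a feature has camera-frame coordinates (X(t), Y) with X(t) = X₀ − v·t (the camera translates toward the feature plane at constant speed v with constant heading), and let its image coordinate under perspective projection be r(t) = f·Y/X(t). Then for every t with X(t) > 0, r is differentiable at t with r′(t) ≠ 0, and r(t)/r′(t) = X(t)/v; that is, the ratio r/ṙ of the image coordinate to its rate of change equals the remaining time until the camera crosses the plane through the feature perpendicular to the direction of motion. -/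
/-! An image coordinate of the form `r = k / X` has `ṙ = -k Ẋ / X²`, so `r / ṙ = -X / Ẋ`: the
constant `k = f Y` cancels and only the depth and its rate remain. For straight motion at speed
`v` the depth rate is `Ẋ = -v`, giving `r / ṙ = X / v`. -/

section InverseDepth

variable {𝕜 : Type*} [NontriviallyNormedField 𝕜] {X : 𝕜 → 𝕜} {X' k t : 𝕜}

theorem HasDerivAt.const_div_of_ne_zero (hX : HasDerivAt X X' t) (hXt : X t ≠ 0) :
    HasDerivAt (fun s => k / X s) (-(k * X') / X t ^ 2) t :=
  ((hasDerivAt_const t k).fun_div hX hXt).congr_deriv (by ring)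

theorem deriv_const_div_ne_zero (hX : HasDerivAt X X' t) (hXt : X t ≠ 0) (hk : k ≠ 0)
    (hX' : X' ≠ 0) : deriv (fun s => k / X s) t ≠ 0 := by
  rw [(hX.const_div_of_ne_zero hXt).deriv]
  exact div_ne_zero (neg_ne_zero.mpr (mul_ne_zero hk hX')) (pow_ne_zero 2 hXt)

theorem const_div_div_deriv_eq (hX : HasDerivAt X X' t) (hXt : X t ≠ 0) (hk : k ≠ 0)
    (hX' : X' ≠ 0) : k / X t / deriv (fun s => k / X s) t = -(X t / X') := by
  rw [(hX.const_div_of_ne_zero hXt).deriv]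
  field_simp

end InverseDepth

theorem time_to_transit_from_image_motion_general (f v Y X₀ : ℝ) (hf : 0 < f) (hv : 0 < v)
    (hY : Y ≠ 0) :
    ∀ t : ℝ, 0 < X₀ - v * t →
      DifferentiableAt ℝ (fun s : ℝ => f * Y / (X₀ - v * s)) t ∧
      deriv (fun s : ℝ => f * Y / (X₀ - v * s)) t ≠ 0 ∧
      (f * Y / (X₀ - v * t)) / deriv (fun s : ℝ => f * Y / (X₀ - v * s)) t =
        (X₀ - v * t) / v := by
  intro t ht
  have hX : HasDerivAt (fun s : ℝ => X₀ - v * s) (-v) t := by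
    simpa using ((hasDerivAt_id t).const_mul v).const_sub X₀
  have hk : f * Y ≠ 0 := mul_ne_zero hf.ne' hY
  refine ⟨(hX.const_div_of_ne_zero ht.ne').differentiableAt,
    deriv_const_div_ne_zero hX ht.ne' hk (neg_ne_zero.mpr hv.ne'), ?_⟩
  rw [const_div_div_deriv_eq hX ht.ne' hk (neg_ne_zero.mpr hv.ne'), div_neg, neg_neg]

/-- For straight constant-speed motion toward the feature plane, time-to-transit is
recoverable from the image plane: `r/ṙ = X/v`, the remaining time until the camera crosses
the plane through the feature perpendicular to the direction of motion. -/
theorem time_to_transit_from_image_motion (f v Y X₀ : ℝ) (hf : 0 < f) (hv : 0 < v)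
    (hY : Y ≠ 0) (hX₀ : 0 < X₀) :
    ∀ t : ℝ, 0 < X₀ - v * t →
      DifferentiableAt ℝ (fun s : ℝ => f * Y / (X₀ - v * s)) t ∧
      deriv (fun s : ℝ => f * Y / (X₀ - v * s)) t ≠ 0 ∧
      (f * Y / (X₀ - v * t)) / deriv (fun s : ℝ => f * Y / (X₀ - v * s)) t =
        (X₀ - v * t) / v :=
  time_to_transit_from_image_motion_general f v Y X₀ hf hv hY
end

section
/- Let R > 0 and k > 0, and set f = 1. Consider the reduced closed-loop planar vector field F(x, θ) = (cos θ, k·(τ_ℓ(x,θ) − τ_r(x,θ))) on the region {(x,θ) : −R < x < R, π/4 < θ < 3π/4}, where τ_ℓ(x,θ) = 1 + (R + x + cos θ)/(sin θ − cos θ) and τ_r(x,θ) = 1 + (R − x − cos θ)/(sin θ + cos θ). Then (x,θ) = (0, π/2) is the unique point of this region at which F vanishes; that is, the centered configuration on the corridor center line with heading parallel to the walls is the unique equilibrium of the closed-loop steering dynamics. -/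
open Real

/-- Time-to-transit (focal length `f = 1`) of the left-wall feature registered at `-1`. -/
noncomputable def tauL1 (R x θ : ℝ) : ℝ :=
  1 + (R + x + Real.cos θ) / (Real.sin θ - Real.cos θ)

/-- Time-to-transit (focal length `f = 1`) of the right-wall feature registered at `+1`. -/
noncomputable def tauR1 (R x θ : ℝ) : ℝ :=
  1 + (R - x - Real.cos θ) / (Real.sin θ + Real.cos θ)

theorem Real.eq_pi_div_two_of_cos_eq_zero {θ : ℝ} (h₀ : 0 ≤ θ) (hπ : θ ≤ π)
    (hcos : cos θ = 0) : θ = π / 2 :=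
  injOn_cos ⟨h₀, hπ⟩ ⟨by positivity, by linarith [pi_pos]⟩ (by rw [hcos, cos_pi_div_two])

theorem tauL1_sub_tauR1_pi_div_two (R x : ℝ) :
    tauL1 R x (π / 2) - tauR1 R x (π / 2) = 2 * x := by
  simp only [tauL1, tauR1, cos_pi_div_two, sin_pi_div_two]
  ring

theorem unique_equilibrium_centerline_general (R k : ℝ) (hk : 0 < k) :
    ∀ x θ : ℝ, -R < x → x < R → π / 4 < θ → θ < 3 * π / 4 →
      ((Real.cos θ = 0 ∧ k * (tauL1 R x θ - tauR1 R x θ) = 0) ↔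
        (x = 0 ∧ θ = π / 2)) := by
  intro x θ _ _ hθ₀ hθ₁
  constructor
  · rintro ⟨hcos, hsteer⟩
    have hθ : θ = π / 2 :=
      eq_pi_div_two_of_cos_eq_zero (by linarith [pi_pos]) (by linarith [pi_pos]) hcos
    rw [hθ, tauL1_sub_tauR1_pi_div_two] at hsteer
    refine ⟨?_, hθ⟩
    simpa [hk.ne'] using hsteer
  · rintro ⟨rfl, rfl⟩
    simp [tauL1_sub_tauR1_pi_div_two]

/-- `(0, π/2)` is the unique equilibrium of the reduced closed-loop steering dynamics
`F(x, θ) = (cos θ, k (τ_ℓ - τ_r))` on the region `-R < x < R`, `π/4 < θ < 3π/4`. -/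
theorem unique_equilibrium_centerline (R k : ℝ) (hR : 0 < R) (hk : 0 < k) :
    ∀ x θ : ℝ, -R < x → x < R → π / 4 < θ → θ < 3 * π / 4 →
      ((Real.cos θ = 0 ∧ k * (tauL1 R x θ - tauR1 R x θ) = 0) ↔
        (x = 0 ∧ θ = π / 2)) :=
  unique_equilibrium_centerline_general R k hk
end
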